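/- Let α ∈ 𝕋 be non-periodic under the doubling map, let n ≥ 0, and let x ∈ 𝕋 satisfy h^{n+1}(x) ≠ α. Then there exists exactly one generalized cylinder set of degree n containing x. -/

import Mathlib

open Set MeasureTheory Filter
open scoped Classical

noncomputable section

/-- The circle `ℝ/ℤ`. -/
abbrev 𝕋 := AddCircle (1 : ℝ)

/-- The doubling map `h(x) = 2x` on the circle. -/
def dbl (x : 𝕋) : 𝕋 := x + x

/-- The representative of a point of the circle lying in `[0,1)`. -/
def rep (x : 𝕋) : ℝ := (AddCircle.equivIco 1 0 x : ℝ)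

/-- `⋆₁ = α/2`. -/
def star1 (α : 𝕋) : 𝕋 := ((rep α / 2 : ℝ) : 𝕋)

/-- `⋆₂ = α/2 + 1/2`. -/
def star2 (α : 𝕋) : 𝕋 := ((rep α / 2 + 1 / 2 : ℝ) : 𝕋)

/-- The closed semicircle `C(L) = {α/2 + t : t ∈ [0,1/2]}`. -/
def arcL (α : 𝕋) : Set 𝕋 := (fun t : ℝ => ((rep α / 2 + t : ℝ) : 𝕋)) '' Set.Icc 0 (1 / 2)

/-- The closed semicircle `C(R) = {α/2 + 1/2 + t : t ∈ [0,1/2]}`. -/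
def arcR (α : 𝕋) : Set 𝕋 :=
  (fun t : ℝ => ((rep α / 2 + 1 / 2 + t : ℝ) : 𝕋)) '' Set.Icc 0 (1 / 2)

/-- The open semicircle `{α/2 + t : t ∈ (0,1/2)}`. -/
def openArcL (α : 𝕋) : Set 𝕋 := (fun t : ℝ => ((rep α / 2 + t : ℝ) : 𝕋)) '' Set.Ioo 0 (1 / 2)

/-- The open semicircle `{α/2 + 1/2 + t : t ∈ (0,1/2)}`. -/
def openArcR (α : 𝕋) : Set 𝕋 :=
  (fun t : ℝ => ((rep α / 2 + 1 / 2 + t : ℝ) : 𝕋)) '' Set.Ioo 0 (1 / 2)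

/-- The alphabet `{L, R, ⋆}`. -/
inductive Letter | L | R | star
deriving DecidableEq

/-- `itin α x n` is the `(n+1)`-st letter of the itinerary `I^α(x)`. -/
def itin (α x : 𝕋) (n : ℕ) : Letter :=
  if dbl^[n] x = star1 α ∨ dbl^[n] x = star2 α then Letter.star
  else if dbl^[n] x ∈ openArcL α then Letter.L else Letter.R

/-- The lamination `x ≈_α y`. -/
def approx (α : 𝕋) (x y : 𝕋) : Prop :=
  ∀ n : ℕ, itin α x n = itin α y n ∨ itin α x n = Letter.star ∨ itin α y n = Letter.star

/-- A point is periodic under the doubling map. -/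
def IsPeriodicPt' (x : 𝕋) : Prop := ∃ k : ℕ, 1 ≤ k ∧ dbl^[k] x = x

/-- `α` is periodic under the doubling map. -/
def Periodic' (α : 𝕋) : Prop := IsPeriodicPt' α

/-- `α` is pre-periodic under the doubling map. -/
def PrePeriodic (α : 𝕋) : Prop := ∃ m : ℕ, IsPeriodicPt' (dbl^[m] α)

/-- `D` is a gluing link with `n` arcs with respect to `≈_α`: a disjoint union of `n` closed
arcs whose `2n` endpoints occur in counterclockwise cyclic order and are consecutively glued
by `≈_α`. -/
def IsGluingLink (α : 𝕋) (n : ℕ) (D : Set 𝕋) : Prop :=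
  0 < n ∧ ∃ s e : ℕ → ℝ,
    (∀ i < n, s i ≤ e i) ∧
    (∀ i j : ℕ, i < j → j < n → e i < s j) ∧
    (∀ i < n, ∀ j < n, e j < s i + 1) ∧
    D = ⋃ i ∈ Finset.range n, (fun t : ℝ => (t : 𝕋)) '' Set.Icc (s i) (e i) ∧
    (∀ i < n, approx α ((e i : ℝ) : 𝕋) ((s ((i + 1) % n) : ℝ) : 𝕋))

/-- `L̃(x)`: the `h`-preimage of `x` in the interior of `C(L)` (for `x ≠ α`). -/
def tldL (α x : 𝕋) : 𝕋 :=
  if ((rep x / 2 : ℝ) : 𝕋) ∈ openArcL α then ((rep x / 2 : ℝ) : 𝕋)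
  else ((rep x / 2 + 1 / 2 : ℝ) : 𝕋)

/-- `R̃(x)`: the `h`-preimage of `x` in the interior of `C(R)` (for `x ≠ α`). -/
def tldR (α x : 𝕋) : 𝕋 :=
  if ((rep x / 2 : ℝ) : 𝕋) ∈ openArcR α then ((rep x / 2 : ℝ) : 𝕋)
  else ((rep x / 2 + 1 / 2 : ℝ) : 𝕋)

/-- The inverse branch associated with a single letter of `{L,R}`
(`true` codes `L`, `false` codes `R`). -/
def tldB (α : 𝕋) (b : Bool) (x : 𝕋) : 𝕋 := if b then tldL α x else tldR α x

/-- `g̃ = g̃[1] ∘ ⋯ ∘ g̃[n]` for a word `g ∈ {L,R}^*`. -/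
def wtld (α : 𝕋) (g : List Bool) (x : 𝕋) : 𝕋 := g.foldr (fun b y => tldB α b y) x

/-- The embedding `e(θ) = exp(2πiθ)` of the circle into `ℂ`. -/
def emb (x : 𝕋) : ℂ := Complex.exp (2 * Real.pi * Complex.I * (rep x))

/-- The chord of a pair of points of the circle: the closed Euclidean segment joining their
images in `ℂ`. -/
def chord (a b : 𝕋) : Set ℂ := segment ℝ (emb a) (emb b)

/-- The union of all chords `l_g` for words `g ∈ {L,R}^n`. -/
def chordsUnion (α : 𝕋) (n : ℕ) : Set ℂ :=
  ⋃ g ∈ {g : List Bool | g.length = n},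
    chord (wtld α g (star1 α)) (wtld α g (star2 α))

/-- The closed unit disk minus the chords of level `n`. -/
def diskMinus (α : 𝕋) (n : ℕ) : Set ℂ := Metric.closedBall (0 : ℂ) 1 \ chordsUnion α n

/-- `C` is a generalized cylinder set of degree `n`: the trace on the circle of the closure of
a connected component of the closed unit disk minus the chords of level `n`. -/
def IsGCS (α : 𝕋) (n : ℕ) (C : Set 𝕋) : Prop :=
  ∃ z ∈ diskMinus α n,
    C = {x : 𝕋 | emb x ∈ closure (connectedComponentIn (diskMinus α n) z)}

/-- The closed region of the circle associated with a letter (`⋆` imposes no restriction). -/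
def semi (α : 𝕋) : Letter → Set 𝕋
  | Letter.L => arcL α
  | Letter.R => arcR α
  | Letter.star => Set.univ

/-- `C(u)` for a word `u ∈ {L,R,⋆}^m`. -/
def cylSet (α : 𝕋) (u : List Letter) : Set 𝕋 :=
  {x : 𝕋 | ∀ i < u.length, dbl^[i] x ∈ semi α (u.getD i Letter.star)}

/-- The digit sequence of `I(α) = I^α(α)` (0-indexed: `ia α n` is the `(n+1)`-st digit). -/
def ia (α : 𝕋) (n : ℕ) : Letter := itin α α n

/-- A set `ℛ ⊆ ℕ` of indices is `D`-rare. -/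
def DRare (D : ℕ) (R : Finset ℕ) : Prop :=
  ∀ i : ℕ, (R.filter (fun j => i ≤ j ∧ j ≤ i + D)).card ≤ 3

/-- The `i`-th digit (1-based) of `I(α)[1..n]` is `(D,ℛ)`-duplicating. -/
def DupDigit (α : 𝕋) (D : ℕ) (R : Finset ℕ) (n i : ℕ) : Prop :=
  ∃ a b : ℕ, 1 ≤ a ∧ a ≤ i ∧ i ≤ b ∧ b ≤ n ∧
    (∀ j, a ≤ j → j ≤ b → j ∉ R → ia α (j - 1) = ia α (j - a)) ∧
    (b = n ∨ D < b - a + 1)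


/-- `α` is strongly recurrent. -/
def StronglyRecurrent (α : 𝕋) : Prop :=
  ∀ D : ℕ, 0 < D → ∀ τ : ℝ, τ < 1 →
    ∃ n : ℕ, D < n ∧ ∃ R : Finset ℕ, R ⊆ Finset.Icc 1 n ∧ DRare D R ∧
      τ * n < ((Finset.Icc 1 n).filter (fun i => DupDigit α D R n i)).card

/-- `α` is weakly pre-periodic with period `k`. -/
def WeaklyPrePeriodicWith (α : 𝕋) (k : ℕ) : Prop :=
  1 ≤ k ∧ ∃ m : ℕ, 1 ≤ m ∧ ∃ X : Letter, (X = Letter.L ∨ X = Letter.R) ∧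
    ∀ n : ℕ, ia α (m + k * n - 1) = X

/-- `α` is weakly pre-periodic (for some period). -/
def WeaklyPrePeriodic (α : 𝕋) : Prop := ∃ k : ℕ, WeaklyPrePeriodicWith α k

end

/-! A point of the unit circle lies on a chord only if it is one of its endpoints, by strict
convexity of the disk. The chord of a word `g` of length `n` joins `g̃(⋆₁)` and `g̃(⋆₂)`, which
`h^{n+1}` maps to `α`; so if `h^{n+1}(x) ≠ α` then `e(x)` lies on no chord of level `n`. These
finitely many chords form a closed set, so `e(x)` has a convex neighbourhood in the disk missing
all of them. Hence every component of the disk minus the chords whose closure contains `e(x)` is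
the component of `e(x)` itself. -/

open Metric Topology

section ConnectedComponent

variable {X : Type*} [TopologicalSpace X]

theorem connectedComponentIn_eq_of_mem_closure {D U : Set X} {x z : X} (hxD : x ∈ D)
    (hU : U ∈ 𝓝[D] x) (hUD : U ⊆ D) (hUc : IsPreconnected U)
    (hx : x ∈ closure (connectedComponentIn D z)) :
    connectedComponentIn D z = connectedComponentIn D x := by
  have hU' : U ∈ 𝓝[connectedComponentIn D z] x :=
    nhdsWithin_mono _ (connectedComponentIn_subset D z) hU
  obtain ⟨w, hwU, hwz⟩ := (mem_closure_iff_nhdsWithin_neBot.1 hx).nonempty_of_mem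
    (inter_mem hU' self_mem_nhdsWithin)
  have hwx : w ∈ connectedComponentIn D x :=
    hUc.subset_connectedComponentIn (mem_of_mem_nhdsWithin hxD hU) hUD hwU
  rw [connectedComponentIn_eq hwz, connectedComponentIn_eq hwx]

end ConnectedComponent

section Convex

variable {E : Type*} [NormedAddCommGroup E] [NormedSpace ℝ E]

theorem exists_isPreconnected_mem_nhdsWithin_diff {S K : Set E} (hS : Convex ℝ S)
    (hK : IsClosed K) {x : E} (hx : x ∉ K) :
    ∃ U ∈ 𝓝[S \ K] x, U ⊆ S \ K ∧ IsPreconnected U := by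
  obtain ⟨ε, hε, hball⟩ := Metric.isOpen_iff.1 hK.isOpen_compl x hx
  refine ⟨S ∩ ball x ε, mem_nhdsWithin.2 ⟨ball x ε, isOpen_ball, mem_ball_self hε, ?_⟩,
    fun y hy => ⟨hy.1, hball hy.2⟩, (hS.inter (convex_ball x ε)).isPreconnected⟩
  exact fun y hy => ⟨hy.2.1, hy.1⟩

theorem connectedComponentIn_convex_diff_eq_of_mem_closure {S K : Set E} (hS : Convex ℝ S)
    (hK : IsClosed K) {x z : E} (hx : x ∈ S \ K)
    (hxz : x ∈ closure (connectedComponentIn (S \ K) z)) :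
    connectedComponentIn (S \ K) z = connectedComponentIn (S \ K) x := by
  obtain ⟨U, hU, hUD, hUc⟩ := exists_isPreconnected_mem_nhdsWithin_diff hS hK hx.2
  exact connectedComponentIn_eq_of_mem_closure hx hU hUD hUc hxz

theorem eq_or_eq_of_mem_segment_of_norm_eq [StrictConvexSpace ℝ E] {a b z : E} {r : ℝ}
    (ha : ‖a‖ ≤ r) (hb : ‖b‖ ≤ r) (hz : z ∈ segment ℝ a b) (hzr : ‖z‖ = r) :
    z = a ∨ z = b := by
  by_contra! h
  have hab : a ≠ b := by
    rintro rfl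
    exact h.1 (by simpa using hz)
  have hz' := openSegment_subset_ball_of_ne (z := 0) (by simpa using ha) (by simpa using hb)
    hab (mem_openSegment_of_ne_left_right h.1.symm h.2.symm hz)
  rw [mem_ball_zero_iff, hzr] at hz'
  exact lt_irrefl r hz'

end Convex

lemma coe_rep (x : 𝕋) : ((rep x : ℝ) : 𝕋) = x :=
  (AddCircle.equivIco 1 0).symm_apply_apply x

lemma emb_eq_toCircle (x : 𝕋) : emb x = AddCircle.toCircle x := by
  conv_rhs => rw [← coe_rep x]
  rw [AddCircle.toCircle_apply_mk, Circle.coe_exp, emb]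
  push_cast
  ring_nf

lemma emb_injective : Function.Injective emb := by
  intro x y h
  simp only [emb_eq_toCircle] at h
  exact AddCircle.injective_toCircle one_ne_zero (Circle.ext h)

lemma norm_emb (x : 𝕋) : ‖emb x‖ = 1 := by
  rw [emb_eq_toCircle]
  exact Circle.norm_coe _

lemma dbl_coe_half (r : ℝ) : dbl ((r / 2 : ℝ) : 𝕋) = r := by
  rw [dbl, ← AddCircle.coe_add, add_halves]

lemma dbl_coe_half_add_half (r : ℝ) : dbl ((r / 2 + 1 / 2 : ℝ) : 𝕋) = r := by
  rw [dbl, ← AddCircle.coe_add, show r / 2 + 1 / 2 + (r / 2 + 1 / 2) = r + 1 by ring,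
    AddCircle.coe_add_period]

lemma dbl_tldL (α x : 𝕋) : dbl (tldL α x) = x := by
  unfold tldL
  split <;> simp only [dbl_coe_half, dbl_coe_half_add_half, coe_rep]

lemma dbl_tldR (α x : 𝕋) : dbl (tldR α x) = x := by
  unfold tldR
  split <;> simp only [dbl_coe_half, dbl_coe_half_add_half, coe_rep]

lemma dbl_tldB (α : 𝕋) (b : Bool) (x : 𝕋) : dbl (tldB α b x) = x := by
  cases b
  · exact dbl_tldR α x
  · exact dbl_tldL α x

lemma dbl_star1 (α : 𝕋) : dbl (star1 α) = α := by
  rw [star1, dbl_coe_half, coe_rep]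

lemma dbl_star2 (α : 𝕋) : dbl (star2 α) = α := by
  rw [star2, dbl_coe_half_add_half, coe_rep]

lemma dbl_iterate_wtld (α : 𝕋) (g : List Bool) (x : 𝕋) :
    dbl^[g.length] (wtld α g x) = x := by
  induction g with
  | nil => rfl
  | cons b g ih =>
    rw [List.length_cons, Function.iterate_succ_apply, wtld, List.foldr_cons, dbl_tldB]
    exact ih

lemma dbl_iterate_succ_wtld {α s : 𝕋} (hs : dbl s = α) (g : List Bool) :
    dbl^[g.length + 1] (wtld α g s) = α := by
  rw [Function.iterate_succ_apply', dbl_iterate_wtld, hs]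

lemma isClosed_chordsUnion (α : 𝕋) (n : ℕ) : IsClosed (chordsUnion α n) := by
  refine (List.finite_length_eq Bool n).isClosed_biUnion fun g _ => ?_
  rw [chord, ← convexHull_pair (𝕜 := ℝ)]
  exact (Set.toFinite _).isClosed_convexHull ℝ

lemma emb_notMem_chordsUnion {α : 𝕋} {n : ℕ} {x : 𝕋} (hx : dbl^[n + 1] x ≠ α) :
    emb x ∉ chordsUnion α n := by
  simp only [chordsUnion, mem_iUnion, mem_ofPred_eq, not_exists]
  rintro g rfl hmem
  rcases eq_or_eq_of_mem_segment_of_norm_eq (norm_emb _).le (norm_emb _).le hmem (norm_emb x)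
    with h | h
  · exact hx (emb_injective h ▸ dbl_iterate_succ_wtld (dbl_star1 α) g)
  · exact hx (emb_injective h ▸ dbl_iterate_succ_wtld (dbl_star2 α) g)

lemma emb_mem_diskMinus {α : 𝕋} {n : ℕ} {x : 𝕋} (hx : dbl^[n + 1] x ≠ α) :
    emb x ∈ diskMinus α n :=
  ⟨mem_closedBall_zero_iff.2 (norm_emb x).le, emb_notMem_chordsUnion hx⟩

theorem stmt_9_general (α : 𝕋) (n : ℕ) (x : 𝕋)
    (hx : dbl^[n + 1] x ≠ α) :
    ∃! C : Set 𝕋, IsGCS α n C ∧ x ∈ C := by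
  have hx' := emb_mem_diskMinus hx
  refine ⟨{y | emb y ∈ closure (connectedComponentIn (diskMinus α n) (emb x))},
    ⟨⟨emb x, hx', rfl⟩, subset_closure (mem_connectedComponentIn hx')⟩, ?_⟩
  rintro C ⟨⟨z, -, rfl⟩, hxC⟩
  simp only [diskMinus] at hx' hxC ⊢
  rw [connectedComponentIn_convex_diff_eq_of_mem_closure (convex_closedBall 0 1)
    (isClosed_chordsUnion α n) hx' hxC]

/-- if `α` is not periodic and `h^{n+1}(x) ≠ α`, then there is exactly one
generalized cylinder set of degree `n` containing `x`. -/
theorem stmt_9 (α : 𝕋) (hα : ¬ Periodic' α) (n : ℕ) (x : 𝕋)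
    (hx : dbl^[n + 1] x ≠ α) :
    ∃! C : Set 𝕋, IsGCS α n C ∧ x ∈ C :=
  stmt_9_general α n x hx
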